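/- arXiv:math/0702094 — 2 statements merged into one kernel-verified Lean document; each statement's English description precedes it below -/
import Mathlib

section
/- The total variation cannot be represented as a finite linear combination with positive coefficients of standard RPI-norms: there do not exist an integer k ≥ 1, positive real numbers a₁, …, a_k, and functions ψ₁, …, ψ_k ∈ AS¹(ℝ), each not identically zero, such that V_φ = Σ_{i=1}^{k} a_i · ‖φ‖_[ψ_i] for every φ ∈ AS¹(ℝ). In particular, the total variation is not a standard RPI-norm. -/
open MeasureTheory Set

noncomputable section

/-- The function `S` of the paper. -/
def Sfun (t : ℝ) : ℝ :=
  if t ≤ -1 then 0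
  else if t ≤ 0 then (t + 1) ^ 2 / 2
  else if t ≤ 1 then 1 - (t - 1) ^ 2 / 2
  else 1

/-- The function `Λ` of the paper. -/
def Lam (t : ℝ) : ℝ := Sfun (t + 1) - Sfun (t - 1)

/-- Almost sigmoidal functions of class `C¹`. -/
def AS1 (φ : ℝ → ℝ) : Prop :=
  ContDiff ℝ 1 φ ∧
    ∃ a b : ℝ, a ≤ b ∧ (∀ t ≤ a, φ t = 0) ∧ ∀ t, b ≤ t → φ t = φ b

/-- Orientation-preserving `C¹`-diffeomorphisms of `ℝ`. -/
def OPDiffeo (h : ℝ → ℝ) : Prop :=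
  ContDiff ℝ 1 h ∧ Function.Bijective h ∧
    (∃ g : ℝ → ℝ, ContDiff ℝ 1 g ∧ Function.LeftInverse g h ∧ Function.RightInverse g h) ∧
    ∀ t, 0 < deriv h t

/-- Total variation `V_φ = ∫ |φ'|`. -/
def totalVar (φ : ℝ → ℝ) : ℝ := ∫ t, |deriv φ t|

/-- A reparametrization invariant norm on `AS¹(ℝ)`. -/
structure IsRPINorm (N : (ℝ → ℝ) → ℝ) : Prop where
  nonneg : ∀ φ, AS1 φ → 0 ≤ N φ
  eq_zero_iff : ∀ φ, AS1 φ → (N φ = 0 ↔ ∀ t, φ t = 0)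
  smul : ∀ (c : ℝ) (φ : ℝ → ℝ), AS1 φ → N (fun t => c * φ t) = |c| * N φ
  triangle : ∀ φ ψ : ℝ → ℝ, AS1 φ → AS1 ψ → N (fun t => φ t + ψ t) ≤ N φ + N ψ
  invariant : ∀ (φ h : ℝ → ℝ), AS1 φ → OPDiffeo h → N (φ ∘ h) = N φ

/-- The standard RPI-norm `‖φ‖_[ψ]`. -/
def stdNorm (ψ φ : ℝ → ℝ) : ℝ :=
  ⨆ h : {h : ℝ → ℝ // OPDiffeo h}, |∫ t, φ (-t) * deriv (ψ ∘ h.1) t|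

/-- The function `S_n`. -/
def Sn (n : ℕ) : ℝ → ℝ := fun t => ∑ i ∈ Finset.range n, (-1 : ℝ) ^ i * Sfun (t - 2 * (i : ℝ))

/-- The function `L_n`. -/
def Lfun (n : ℕ) : ℝ → ℝ := fun t => ∑ i ∈ Finset.range n, (-1 : ℝ) ^ i * Lam (t - 4 * (i : ℝ))

/-- `W` is a separating set for `f`: `f` is monotone on each connected component of `ℝ \ W`. -/
def IsSepSet (f : ℝ → ℝ) (W : Finset ℝ) : Prop :=
  ∀ t, t ∉ (W : Set ℝ) →
    MonotoneOn f (connectedComponentIn ((W : Set ℝ)ᶜ) t) ∨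
      AntitoneOn f (connectedComponentIn ((W : Set ℝ)ᶜ) t)

/-- `f` is piecewise monotone. -/
def PiecewiseMonotone (f : ℝ → ℝ) : Prop := ∃ W : Finset ℝ, IsSepSet f W

/-- `l(f)`: the minimum cardinality of a separating set for `f`. -/
def lval (f : ℝ → ℝ) : ℕ := sInf {n : ℕ | ∃ W : Finset ℝ, W.card = n ∧ IsSepSet f W}


open Filter Topology

/-!
A standard RPI-norm is dominated by the total variation of its generator: substituting
`u = h t` gives `‖φ‖_[ψ] ≤ sup |φ| · V_ψ`. Hence a positive combination `∑ aᵢ ‖·‖_[ψᵢ]` stays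
bounded by `∑ aᵢ V_{ψᵢ}` on functions with `|φ| ≤ 1`. The functions `L_n`, made of `n` disjoint
bumps `±Λ` of height one, satisfy `|L_n| ≤ 1` and `V_{L_n} = 2n`, so `V` cannot be such a
combination.
-/

theorem AS1.hasCompactSupport_deriv {φ : ℝ → ℝ} (hφ : AS1 φ) : HasCompactSupport (deriv φ) := by
  obtain ⟨-, a, b, -, h_left, h_right⟩ := hφ
  refine HasCompactSupport.intro (isCompact_Icc (a := a) (b := b)) fun t ht => ?_
  rcases not_and_or.mp ht with ht | ht <;> rw [not_le] at ht
  · have : φ =ᶠ[𝓝 t] fun _ => 0 :=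
      eventually_of_mem (Iio_mem_nhds ht) fun s hs => h_left s (le_of_lt hs)
    rw [this.deriv_eq, deriv_const]
  · have : φ =ᶠ[𝓝 t] fun _ => φ b :=
      eventually_of_mem (Ioi_mem_nhds ht) fun s hs => h_right s (le_of_lt hs)
    rw [this.deriv_eq, deriv_const]

theorem AS1.integrable_abs_deriv {φ : ℝ → ℝ} (hφ : AS1 φ) : Integrable fun t => |deriv φ t| :=
  ((contDiff_one_iff_deriv.mp hφ.1).2.integrable_of_hasCompactSupport
    hφ.hasCompactSupport_deriv).abs

namespace OPDiffeo

variable {h ψ : ℝ → ℝ}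

theorem abs_deriv_comp (hh : OPDiffeo h) (hψ : Differentiable ℝ ψ) (t : ℝ) :
    |deriv (ψ ∘ h) t| = |deriv h t| • |deriv ψ (h t)| := by
  have hhd : Differentiable ℝ h := hh.1.differentiable one_ne_zero
  rw [((hψ (h t)).hasDerivAt.comp t (hhd t).hasDerivAt).deriv, smul_eq_mul, abs_mul, mul_comm]

theorem image_univ_eq_univ (hh : OPDiffeo h) : h '' univ = univ := by
  rw [image_univ, hh.2.1.2.range_eq]

theorem hasDerivWithinAt_univ (hh : OPDiffeo h) :
    ∀ t ∈ (univ : Set ℝ), HasDerivWithinAt h (deriv h t) univ t :=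
  fun t _ => ((hh.1.differentiable one_ne_zero) t).hasDerivAt.hasDerivWithinAt

theorem integrable_abs_deriv_comp (hh : OPDiffeo h) (hψ : Differentiable ℝ ψ)
    (hint : Integrable fun t => |deriv ψ t|) : Integrable fun t => |deriv (ψ ∘ h) t| := by
  have := (integrableOn_image_iff_integrableOn_abs_deriv_smul MeasurableSet.univ
    hh.hasDerivWithinAt_univ hh.2.1.1.injOn fun u => |deriv ψ u|).mp
  rw [hh.image_univ_eq_univ, integrableOn_univ, integrableOn_univ] at this
  simpa only [hh.abs_deriv_comp hψ] using this hint

theorem totalVar_comp (hh : OPDiffeo h) (hψ : Differentiable ℝ ψ) :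
    totalVar (ψ ∘ h) = totalVar ψ := by
  have := integral_image_eq_integral_abs_deriv_smul MeasurableSet.univ
    hh.hasDerivWithinAt_univ hh.2.1.1.injOn fun u => |deriv ψ u|
  rw [hh.image_univ_eq_univ, Measure.restrict_univ] at this
  simp only [totalVar, hh.abs_deriv_comp hψ, this]

end OPDiffeo

theorem stdNorm_le_mul_totalVar {ψ φ : ℝ → ℝ} {M : ℝ} (hψ : AS1 ψ) (hφ : ∀ t, |φ t| ≤ M) :
    stdNorm ψ φ ≤ M * totalVar ψ := by
  have hM : 0 ≤ M := (abs_nonneg _).trans (hφ 0)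
  refine Real.iSup_le (fun ⟨h, hh⟩ => ?_) (mul_nonneg hM (integral_nonneg fun _ => abs_nonneg _))
  have hψd : Differentiable ℝ ψ := hψ.1.differentiable one_ne_zero
  rw [← hh.totalVar_comp hψd, totalVar, ← integral_const_mul, ← Real.norm_eq_abs]
  refine norm_integral_le_of_norm_le
    ((hh.integrable_abs_deriv_comp hψd hψ.integrable_abs_deriv).const_mul M)
    (ae_of_all _ fun t => ?_)
  rw [norm_mul, Real.norm_eq_abs, Real.norm_eq_abs]
  exact mul_le_mul_of_nonneg_right (hφ _) (abs_nonneg _)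

def halfSqRamp (s : ℝ) : ℝ := max s 0 ^ 2 / 2

theorem hasDerivAt_halfSqRamp (s : ℝ) : HasDerivAt halfSqRamp (max s 0) s := by
  refine hasDerivAt_of_hasDerivAt_of_ne' (x := 0) (g := fun y => max y 0) (fun y hy => ?_)
    (by unfold halfSqRamp; fun_prop : Continuous halfSqRamp).continuousAt
    (continuous_id.max continuous_const).continuousAt s
  rcases hy.lt_or_gt with hy | hy
  · have : halfSqRamp =ᶠ[𝓝 y] fun _ => 0 :=
      eventually_of_mem (Iio_mem_nhds hy) fun u hu => by
        simp [halfSqRamp, max_eq_right (mem_Iio.mp hu).le]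
    rw [max_eq_right hy.le]
    exact (hasDerivAt_const y 0).congr_of_eventuallyEq this
  · have : halfSqRamp =ᶠ[𝓝 y] fun u => u ^ 2 / 2 :=
      eventually_of_mem (Ioi_mem_nhds hy) fun u hu => by
        simp [halfSqRamp, max_eq_left (mem_Ioi.mp hu).le]
    have hsq : HasDerivAt (fun u : ℝ => u ^ 2 / 2) y y := by
      simpa using (hasDerivAt_pow 2 y).div_const 2
    rw [max_eq_left hy.le]
    exact hsq.congr_of_eventuallyEq this

theorem Sfun_eq_halfSqRamp (t : ℝ) :
    Sfun t = halfSqRamp (t + 1) - 2 * halfSqRamp t + halfSqRamp (t - 1) := by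
  unfold Sfun halfSqRamp
  split_ifs <;> simp only [max_def] <;> split_ifs <;> linarith

-- The hat function `max 0 (1 - |t|)`, written as the second difference of the ramp `max t 0`.
def tent (t : ℝ) : ℝ := max (t + 1) 0 - 2 * max t 0 + max (t - 1) 0

theorem hasDerivAt_Sfun (t : ℝ) : HasDerivAt Sfun (tent t) t := by
  rw [show Sfun = _ from funext Sfun_eq_halfSqRamp]
  exact (((hasDerivAt_halfSqRamp _).comp_add_const t 1).sub
    ((hasDerivAt_halfSqRamp t).const_mul 2)).add ((hasDerivAt_halfSqRamp _).comp_sub_const t 1)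

@[fun_prop]
theorem continuous_tent : Continuous tent := by
  unfold tent; fun_prop

theorem tent_nonneg (t : ℝ) : 0 ≤ tent t := by
  unfold tent; simp only [max_def]; split_ifs <;> linarith

theorem tent_eq_zero {t : ℝ} (ht : 1 ≤ |t|) : tent t = 0 := by
  unfold tent
  rcases le_abs'.mp ht with ht | ht <;> simp only [max_def] <;> split_ifs <;> linarith

theorem integrable_tent : Integrable tent :=
  continuous_tent.integrable_of_hasCompactSupport <|
    HasCompactSupport.intro (isCompact_Icc (a := -1) (b := 1)) fun _ ht =>
      tent_eq_zero (not_le.mp fun h => ht (abs_le.mp h)).le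

theorem Sfun_eq_zero_of_le {t : ℝ} (ht : t ≤ -1) : Sfun t = 0 := by
  unfold Sfun; rw [if_pos ht]

theorem Sfun_eq_one_of_one_le {t : ℝ} (ht : 1 ≤ t) : Sfun t = 1 := by
  unfold Sfun; split_ifs <;> nlinarith

theorem Sfun_mem_Icc (t : ℝ) : Sfun t ∈ Set.Icc 0 1 := by
  unfold Sfun; split_ifs <;> constructor <;> nlinarith

theorem integral_tent : ∫ t, tent t = 1 := by
  have hbot : Tendsto Sfun atBot (𝓝 0) := tendsto_const_nhds.congr' <|
    (eventually_le_atBot (-1)).mono fun t ht => (Sfun_eq_zero_of_le ht).symm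
  have htop : Tendsto Sfun atTop (𝓝 1) := tendsto_const_nhds.congr' <|
    (eventually_ge_atTop 1).mono fun t ht => (Sfun_eq_one_of_one_le ht).symm
  simpa using integral_of_hasDerivAt_of_tendsto hasDerivAt_Sfun integrable_tent hbot htop

theorem hasDerivAt_Lam (t : ℝ) : HasDerivAt Lam (tent (t + 1) - tent (t - 1)) t :=
  ((hasDerivAt_Sfun _).comp_add_const t 1).sub ((hasDerivAt_Sfun _).comp_sub_const t 1)

@[fun_prop]
theorem contDiff_Lam : ContDiff ℝ 1 Lam :=
  contDiff_one_iff_deriv.mpr ⟨fun t => (hasDerivAt_Lam t).differentiableAt, by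
    rw [show deriv Lam = _ from funext fun t => (hasDerivAt_Lam t).deriv]
    fun_prop⟩

theorem Lam_eq_zero {t : ℝ} (ht : 2 ≤ |t|) : Lam t = 0 := by
  rcases le_abs'.mp ht with ht | ht
  · rw [Lam, Sfun_eq_zero_of_le (by linarith), Sfun_eq_zero_of_le (by linarith), sub_zero]
  · rw [Lam, Sfun_eq_one_of_one_le (by linarith), Sfun_eq_one_of_one_le (by linarith), sub_self]

theorem abs_Lam_le (t : ℝ) : |Lam t| ≤ 1 := by
  obtain ⟨h₁, h₂⟩ := Sfun_mem_Icc (t + 1)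
  obtain ⟨h₃, h₄⟩ := Sfun_mem_Icc (t - 1)
  rw [Lam, abs_le]
  constructor <;> linarith

theorem deriv_Lam_eq_zero {t : ℝ} (ht : 2 ≤ |t|) : deriv Lam t = 0 := by
  rw [(hasDerivAt_Lam t).deriv]
  rcases le_abs'.mp ht with ht | ht
  · rw [tent_eq_zero, tent_eq_zero, sub_zero] <;> rw [le_abs'] <;> left <;> linarith
  · rw [tent_eq_zero, tent_eq_zero, sub_self] <;> rw [le_abs'] <;> right <;> linarith

-- `tent (t + 1)` and `tent (t - 1)` have disjoint supports `[-2, 0]` and `[0, 2]`.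
theorem abs_deriv_Lam (t : ℝ) : |deriv Lam t| = tent (t + 1) + tent (t - 1) := by
  rw [(hasDerivAt_Lam t).deriv]
  rcases le_total t 0 with ht | ht
  · rw [tent_eq_zero (t := t - 1) (by rw [le_abs']; left; linarith), sub_zero, add_zero,
      abs_of_nonneg (tent_nonneg _)]
  · rw [tent_eq_zero (t := t + 1) (by rw [le_abs']; right; linarith), zero_sub, zero_add,
      abs_neg, abs_of_nonneg (tent_nonneg _)]

theorem integrable_abs_deriv_Lam : Integrable fun t => |deriv Lam t| := by
  simp only [abs_deriv_Lam]
  exact (integrable_tent.comp_add_right 1).add (integrable_tent.comp_sub_right 1)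

theorem integral_abs_deriv_Lam : ∫ t, |deriv Lam t| = 2 := by
  simp only [abs_deriv_Lam]
  rw [integral_add (integrable_tent.comp_add_right 1) (integrable_tent.comp_sub_right 1),
    integral_add_right_eq_self tent, integral_sub_right_eq_self tent, integral_tent]
  norm_num

theorem eq_of_abs_sub_lt_two {t : ℝ} {i j : ℕ} (hi : |t - 4 * i| < 2) (hj : |t - 4 * j| < 2) :
    i = j := by
  rw [abs_lt] at hi hj
  have : (i : ℝ) < j + 1 := by linarith
  have : (j : ℝ) < i + 1 := by linarith
  norm_cast at *
  omega

-- The `i`-th bump of `L_n` lives on `(4i - 2, 4i + 2)`, so at most one is nonzero at `t`.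
theorem exists_two_le_abs_sub (t : ℝ) : ∃ j : ℕ, ∀ i, i ≠ j → 2 ≤ |t - 4 * i| := by
  by_cases h : ∃ j : ℕ, |t - 4 * j| < 2
  · obtain ⟨j, hj⟩ := h
    exact ⟨j, fun i hij => not_lt.mp fun hi => hij (eq_of_abs_sub_lt_two hi hj)⟩
  · exact ⟨0, fun i _ => not_lt.mp fun hi => h ⟨i, hi⟩⟩

theorem hasDerivAt_Lfun (n : ℕ) (t : ℝ) :
    HasDerivAt (Lfun n) (∑ i ∈ Finset.range n, (-1) ^ i * deriv Lam (t - 4 * i)) t :=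
  HasDerivAt.fun_sum fun _ _ =>
    (((contDiff_Lam.differentiable one_ne_zero) _).hasDerivAt.comp_sub_const t _).const_mul _

theorem abs_Lfun_le (n : ℕ) (t : ℝ) : |Lfun n t| ≤ 1 := by
  obtain ⟨j, hj⟩ := exists_two_le_abs_sub t
  rw [Lfun, Finset.sum_eq_ite j fun i _ hij => by rw [Lam_eq_zero (hj i hij), mul_zero]]
  split_ifs
  · simpa [abs_mul] using abs_Lam_le _
  · simp

theorem abs_deriv_Lfun (n : ℕ) (t : ℝ) :
    |deriv (Lfun n) t| = ∑ i ∈ Finset.range n, |deriv Lam (t - 4 * i)| := by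
  obtain ⟨j, hj⟩ := exists_two_le_abs_sub t
  rw [(hasDerivAt_Lfun n t).deriv,
    Finset.sum_eq_ite j fun i _ hij => by rw [deriv_Lam_eq_zero (hj i hij), mul_zero],
    Finset.sum_eq_ite j fun i _ hij => by rw [deriv_Lam_eq_zero (hj i hij), abs_zero]]
  split_ifs <;> simp [abs_mul]

theorem totalVar_Lfun (n : ℕ) : totalVar (Lfun n) = 2 * n := by
  simp only [totalVar, abs_deriv_Lfun]
  rw [integral_finsetSum _ fun i _ => integrable_abs_deriv_Lam.comp_sub_right _]
  simp only [integral_sub_right_eq_self (fun t => |deriv Lam t|), integral_abs_deriv_Lam,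
    Finset.sum_const, Finset.card_range, nsmul_eq_mul]
  ring

theorem AS1_Lfun (n : ℕ) : AS1 (Lfun n) := by
  have hzero : ∀ t : ℝ, (t ≤ -2 ∨ 4 * n ≤ t) → Lfun n t = 0 := fun t ht =>
    Finset.sum_eq_zero fun i hi => by
      have : (i : ℝ) + 1 ≤ n := by exact_mod_cast Finset.mem_range.mp hi
      rw [Lam_eq_zero (le_abs'.mpr ?_), mul_zero]
      rcases ht with ht | ht
      · left; linarith [(Nat.cast_nonneg i : (0 : ℝ) ≤ i)]
      · right; linarith
  refine ⟨by unfold Lfun; fun_prop, -2, 4 * n, by linarith [(Nat.cast_nonneg n : (0 : ℝ) ≤ n)],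
    fun t ht => hzero t (.inl ht), fun t ht => ?_⟩
  rw [hzero t (.inr ht), hzero _ (.inr le_rfl)]

theorem statement12 :
    ¬ ∃ (k : ℕ) (a : Fin k → ℝ) (ψ : Fin k → ℝ → ℝ),
      1 ≤ k ∧ (∀ i, 0 < a i) ∧ (∀ i, AS1 (ψ i)) ∧ (∀ i, ¬ ∀ t, ψ i t = 0) ∧
      ∀ φ : ℝ → ℝ, AS1 φ → totalVar φ = ∑ i, a i * stdNorm (ψ i) φ := by
  rintro ⟨k, a, ψ, -, ha, hψ, -, hrep⟩
  obtain ⟨n, hn⟩ := exists_nat_gt (∑ i, a i * totalVar (ψ i))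
  have hbound : totalVar (Lfun n) ≤ ∑ i, a i * totalVar (ψ i) := by
    rw [hrep _ (AS1_Lfun n)]
    gcongr with i
    · exact (ha i).le
    · simpa using stdNorm_le_mul_totalVar (hψ i) (abs_Lfun_le n)
  rw [totalVar_Lfun] at hbound
  linarith [(Nat.cast_nonneg n : (0 : ℝ) ≤ n)]
end
end

section
/- Discrete representation of standard RPI-norms: let φ, ψ ∈ AS¹(ℝ), both not identically zero. Let {J_i = (a_i, b_i)}_{i∈I} be the family of maximal open intervals of ℝ on which ψ′ does not vanish, where I = {0, …, n−1} or I = ℕ. Let [a, b] be the smallest closed interval containing the support of (φ*)′, where φ*(t) = φ(−t). Let T(φ, ψ) be the set of all sequences (τ_i)_{i∈ℕ} of points of [a, b] such that for all i₁, i₂ ∈ I, a_{i₁} ≤ a_{i₂} implies τ_{i₁} ≤ τ_{i₂}, and τ_i = b for every i ∉ I. Then ‖φ‖_[ψ] = sup over (τ_i) ∈ T(φ, ψ) of | Σ_{i∈I} (ψ(b_i) − ψ(a_i)) · φ*(τ_i) |. -/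
open MeasureTheory Set

noncomputable section

/-!
If `h` is an orientation-preserving diffeomorphism with inverse `g`, the substitution `u = h t`
turns `∫ φ(-t) (ψ ∘ h)'(t) dt` into `∫ φ(-g u) ψ'(u) du`, to which only the intervals `(aᵢ, bᵢ)`
contribute. On each of them `ψ'` has constant sign, so the first mean value theorem for integrals
replaces `g` by a value `g(ξᵢ)`; clamping these values to `[A, B]` does not change `φ(-·)`, and it
keeps them ordered like the `aᵢ`. Hence every value of the norm is an admissible sum.

Conversely, an admissible `τ` defines a monotone step function `s` equal to `τᵢ` on `(aᵢ, bᵢ)`.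
Mollifying `s` and adding `u / (k + 1)` gives inverses of diffeomorphisms that converge to `s` on
every `(aᵢ, bᵢ)`, and dominated convergence exhibits the admissible sum as a limit of values of the
norm.
-/

open Filter Topology Convolution ContinuousLinearMap

namespace AS1

variable {φ ψ : ℝ → ℝ}

theorem exists_bound (hφ : AS1 φ) : ∃ M, ∀ t, |φ t| ≤ M := by
  obtain ⟨hC1, p, q, hpq, hl, hr⟩ := hφ
  obtain ⟨C, hC⟩ :=
    isCompact_Icc.exists_bound_of_continuousOn (hC1.continuous.continuousOn (s := Icc p q))
  refine ⟨max C 0, fun t => ?_⟩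
  rcases le_total t p with htp | hpt
  · simp [hl t htp]
  rcases le_total t q with htq | hqt
  · exact (hC t ⟨hpt, htq⟩).trans (le_max_left _ _)
  · rw [hr t hqt]
    exact (hC q ⟨hpq, le_rfl⟩).trans (le_max_left _ _)

theorem hasCompactSupport_deriv_s14 (hφ : AS1 φ) : HasCompactSupport (deriv φ) := by
  obtain ⟨-, p, q, -, hl, hr⟩ := hφ
  refine HasCompactSupport.intro (isCompact_Icc (a := p) (b := q)) fun t ht => ?_
  rcases not_and_or.1 ht with htp | hqt
  · have : φ =ᶠ[𝓝 t] fun _ => 0 := by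
      filter_upwards [Iio_mem_nhds (not_le.1 htp)] with y hy using hl y hy.le
    rw [this.deriv_eq, deriv_const]
  · have : φ =ᶠ[𝓝 t] fun _ => φ q := by
      filter_upwards [Ioi_mem_nhds (not_le.1 hqt)] with y hy using hr y hy.le
    rw [this.deriv_eq, deriv_const]

theorem integrable_deriv (hφ : AS1 φ) : Integrable (deriv φ) :=
  (hφ.1.continuous_deriv le_rfl).integrable_of_hasCompactSupport hφ.hasCompactSupport_deriv_s14

theorem abs_integral_mul_deriv_le (hψ : AS1 ψ) {c : ℝ → ℝ} {M : ℝ} (hM : ∀ u, |c u| ≤ M) :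
    |∫ u, c u * deriv ψ u| ≤ M * ∫ u, |deriv ψ u| := by
  rw [← Real.norm_eq_abs, ← integral_const_mul]
  refine norm_integral_le_of_norm_le (hψ.integrable_deriv.abs.const_mul M)
    (Eventually.of_forall fun u => ?_)
  rw [Real.norm_eq_abs, abs_mul]
  exact mul_le_mul_of_nonneg_right (hM u) (abs_nonneg _)

end AS1

theorem setIntegral_Ioo_deriv_eq_sub {ψ : ℝ → ℝ} (hψ : ContDiff ℝ 1 ψ) {p q : ℝ} (hpq : p ≤ q) :
    ∫ u in Ioo p q, deriv ψ u = ψ q - ψ p := by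
  rw [← integral_Ioc_eq_integral_Ioo, ← intervalIntegral.integral_of_le hpq]
  exact intervalIntegral.integral_deriv_eq_sub
    (fun x _ => (hψ.differentiable one_ne_zero).differentiableAt)
    ((hψ.continuous_deriv le_rfl).intervalIntegrable p q)

theorem IsPreconnected.forall_pos_or_forall_neg {s : Set ℝ} {f : ℝ → ℝ} (hs : IsPreconnected s)
    (hf : ContinuousOn f s) (hf0 : ∀ t ∈ s, f t ≠ 0) :
    (∀ t ∈ s, 0 < f t) ∨ ∀ t ∈ s, f t < 0 := by
  by_contra! h
  obtain ⟨⟨x, hx, hfx⟩, y, hy, hfy⟩ := h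
  obtain ⟨z, hz, hfz⟩ := hs.intermediate_value hx hy hf ⟨hfx, hfy⟩
  exact hf0 z hz hfz

theorem exists_setIntegral_Ioo_mul_deriv_eq {ψ F : ℝ → ℝ} (hψ : ContDiff ℝ 1 ψ)
    (hF : Continuous F) {p q : ℝ} (hpq : p < q) (hψ' : ∀ t ∈ Ioo p q, deriv ψ t ≠ 0) :
    ∃ ξ ∈ Ioo p q, ∫ u in Ioo p q, F u * deriv ψ u = F ξ * (ψ q - ψ p) := by
  have hcont := hψ.continuous_deriv le_rfl
  have hint : ∀ {w : ℝ → ℝ}, Continuous w → IntegrableOn w (Ioo p q) :=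
    fun hw => hw.integrableOn_Icc.mono_set Ioo_subset_Icc_self
  rw [← setIntegral_Ioo_deriv_eq_sub hψ hpq.le]
  rcases isPreconnected_Ioo.forall_pos_or_forall_neg hcont.continuousOn hψ' with hpos | hneg
  · exact exists_eq_const_mul_setIntegral_of_nonneg (isConnected_Ioo hpq) measurableSet_Ioo
      hF.continuousOn (hint hcont) (hint (hF.mul hcont)) fun t ht => (hpos t ht).le
  · obtain ⟨ξ, hξ, h⟩ := exists_eq_const_mul_setIntegral_of_nonneg (g := fun u => -deriv ψ u)
      (isConnected_Ioo hpq) measurableSet_Ioo hF.continuousOn (hint hcont.neg)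
      (hint (hF.mul hcont.neg)) fun t ht => (neg_pos.2 (hneg t ht)).le
    refine ⟨ξ, hξ, ?_⟩
    simpa only [mul_neg, integral_neg, neg_inj] using h

theorem eq_of_deriv_eq_zero_on_Ioo {f : ℝ → ℝ} (hf : Differentiable ℝ f) {x y : ℝ} (hxy : x ≤ y)
    (h : ∀ t ∈ Ioo x y, deriv f t = 0) : f x = f y := by
  rcases hxy.eq_or_lt with rfl | hlt
  · rfl
  obtain ⟨c, hc, hcd⟩ := exists_deriv_eq_slope f hlt hf.continuous.continuousOn hf.differentiableOn
  rw [h c hc, eq_comm, div_eq_zero_iff, sub_eq_zero] at hcd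
  exact (hcd.resolve_right (sub_ne_zero.2 hlt.ne')).symm

theorem apply_projIcc_eq {f : ℝ → ℝ} (hf : Differentiable ℝ f) {A B : ℝ} (hAB : A ≤ B)
    (hsupp : Function.support (deriv f) ⊆ Icc A B) (x : ℝ) : f (projIcc A B hAB x) = f x := by
  have hzero : ∀ t ∉ Icc A B, deriv f t = 0 :=
    fun t ht => Function.notMem_support.1 fun h => ht (hsupp h)
  rcases le_total x A with hxA | hAx
  · rw [projIcc_of_le_left hAB hxA]
    exact (eq_of_deriv_eq_zero_on_Ioo hf hxA fun t ht => hzero t fun h => ht.2.not_ge h.1).symm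
  rcases le_total B x with hBx | hxB
  · rw [projIcc_of_right_le hAB hBx]
    exact eq_of_deriv_eq_zero_on_Ioo hf hBx fun t ht => hzero t fun h => ht.1.not_ge h.2
  · rw [projIcc_of_mem hAB ⟨hAx, hxB⟩]

namespace OPDiffeo

theorem id : OPDiffeo id :=
  ⟨contDiff_id, Function.bijective_id, ⟨_root_.id, contDiff_id, fun _ => rfl, fun _ => rfl⟩,
    fun t => by simp⟩

theorem integral_mul_deriv_comp {h g ψ : ℝ → ℝ} (hh : OPDiffeo h)
    (hgh : Function.LeftInverse g h) (hψ : Differentiable ℝ ψ) (F : ℝ → ℝ) :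
    ∫ t, F t * deriv (ψ ∘ h) t = ∫ u, F (g u) * deriv ψ u := by
  obtain ⟨hC1, hbij, -, hpos⟩ := hh
  have hd : Differentiable ℝ h := hC1.differentiable one_ne_zero
  have := integral_image_eq_integral_abs_deriv_smul MeasurableSet.univ
    (fun x _ => (hd x).hasDerivAt.hasDerivWithinAt) hbij.1.injOn fun u => F (g u) * deriv ψ u
  rw [image_univ, hbij.2.range_eq, setIntegral_univ, setIntegral_univ] at this
  rw [this]
  congr 1 with t
  rw [hgh t, deriv_comp t (hψ _) (hd t), abs_of_pos (hpos t), smul_eq_mul]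
  ring

end OPDiffeo

theorem exists_opDiffeo_leftInverse {g : ℝ → ℝ} (hg : ContDiff ℝ 1 g) (hpos : ∀ u, 0 < deriv g u)
    (hsurj : Function.Surjective g) : ∃ h, OPDiffeo h ∧ Function.LeftInverse g h := by
  let e := (strictMono_of_deriv_pos hpos).orderIsoOfSurjective g hsurj
  have hgh : Function.LeftInverse g e.symm := e.apply_symm_apply
  have hder : ∀ y, HasDerivAt e.symm (deriv g (e.symm y))⁻¹ y := fun y =>
    .of_local_left_inverse e.symm.continuous.continuousAt
      ((hg.differentiable one_ne_zero) _).hasDerivAt (hpos _).ne' (Eventually.of_forall hgh)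
  have hderiv : deriv e.symm = fun y => (deriv g (e.symm y))⁻¹ := funext fun y => (hder y).deriv
  refine ⟨e.symm, ⟨?_, e.symm.bijective, ⟨g, hg, hgh, e.symm_apply_apply⟩, fun y => ?_⟩, hgh⟩
  · rw [contDiff_one_iff_deriv, hderiv]
    exact ⟨fun y => (hder y).differentiableAt,
      ((hg.continuous_deriv le_rfl).comp e.symm.continuous).inv₀ fun y => (hpos _).ne'⟩
  · rw [hderiv]
    exact inv_pos.2 (hpos _)

/-- The components of `{t | ψ' t ≠ 0}`: maximality of `(a i, b i)` follows from `deriv_left`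
together with `cover`. -/
structure IsDerivNeZeroIntervals (ψ : ℝ → ℝ) (I : Set ℕ) (a b : ℕ → ℝ) : Prop where
  lt : ∀ i ∈ I, a i < b i
  deriv_ne_zero : ∀ i ∈ I, ∀ t ∈ Ioo (a i) (b i), deriv ψ t ≠ 0
  deriv_left : ∀ i ∈ I, deriv ψ (a i) = 0
  cover : ∀ t, deriv ψ t ≠ 0 → ∃ i ∈ I, t ∈ Ioo (a i) (b i)
  left_ne : ∀ i ∈ I, ∀ j ∈ I, i ≠ j → a i ≠ a j

namespace IsDerivNeZeroIntervals

variable {ψ : ℝ → ℝ} {I : Set ℕ} {a b : ℕ → ℝ} {i j : ℕ}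

theorem left_notMem (hI : IsDerivNeZeroIntervals ψ I a b) (hi : i ∈ I) (hj : j ∈ I) :
    a j ∉ Ioo (a i) (b i) :=
  fun h => hI.deriv_ne_zero i hi (a j) h (hI.deriv_left j hj)

theorem right_le_left_of_lt (hI : IsDerivNeZeroIntervals ψ I a b) (hi : i ∈ I) (hj : j ∈ I)
    (h : a i < a j) : b i ≤ a j :=
  not_lt.1 fun h' => hI.left_notMem hi hj ⟨h, h'⟩

theorem eq_of_left_eq (hI : IsDerivNeZeroIntervals ψ I a b) (hi : i ∈ I) (hj : j ∈ I)
    (h : a i = a j) : i = j :=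
  by_contra fun hij => hI.left_ne i hi j hj hij h

theorem pairwise_disjoint (hI : IsDerivNeZeroIntervals ψ I a b) :
    Pairwise (Function.onFun Disjoint fun i : I => Ioo (a i) (b i)) := by
  intro i j hij
  rcases (hI.left_ne i i.2 j j.2 (Subtype.coe_ne_coe.2 hij)).lt_or_gt with h | h
  · have hle := hI.right_le_left_of_lt i.2 j.2 h
    exact disjoint_left.2 fun x hx hx' => (hx.2.trans_le hle).not_gt hx'.1
  · have hle := hI.right_le_left_of_lt j.2 i.2 h
    exact disjoint_right.2 fun x hx hx' => (hx.2.trans_le hle).not_gt hx'.1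

theorem integral_mul_deriv_eq_tsum (hI : IsDerivNeZeroIntervals ψ I a b) (hψ : AS1 ψ)
    {c : ℝ → ℝ} (hc : AEStronglyMeasurable c) {C : ℝ} (hC : ∀ u, |c u| ≤ C) :
    ∫ u, c u * deriv ψ u = ∑' i : I, ∫ u in Ioo (a i) (b i), c u * deriv ψ u := by
  have hvan : ∀ u ∉ ⋃ i : I, Ioo (a i) (b i), c u * deriv ψ u = 0 := fun u hu => by
    by_contra h
    obtain ⟨i, hi, hu'⟩ := hI.cover u (right_ne_zero_of_mul h)
    exact hu (mem_iUnion.2 ⟨⟨i, hi⟩, hu'⟩)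
  rw [← setIntegral_eq_integral_of_forall_compl_eq_zero hvan]
  exact integral_iUnion (fun _ => measurableSet_Ioo) hI.pairwise_disjoint
    (hψ.integrable_deriv.bdd_mul hc (Eventually.of_forall hC)).integrableOn

theorem integral_mul_deriv_eq_tsum_of_eqOn (hI : IsDerivNeZeroIntervals ψ I a b) (hψ : AS1 ψ)
    {c : ℝ → ℝ} (hc : AEStronglyMeasurable c) {C : ℝ} (hC : ∀ u, |c u| ≤ C) {κ : ℕ → ℝ}
    (hcκ : ∀ i ∈ I, ∀ u ∈ Ioo (a i) (b i), c u = κ i) :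
    ∫ u, c u * deriv ψ u = ∑' i : I, (ψ (b i) - ψ (a i)) * κ i := by
  rw [hI.integral_mul_deriv_eq_tsum hψ hc hC]
  refine tsum_congr fun i => ?_
  rw [setIntegral_congr_fun measurableSet_Ioo fun u hu => congrArg (· * deriv ψ u) (hcκ i i.2 u hu),
    integral_const_mul, setIntegral_Ioo_deriv_eq_sub hψ.1 (hI.lt i i.2).le, mul_comm]

theorem exists_integral_mul_deriv_eq_tsum (hI : IsDerivNeZeroIntervals ψ I a b) (hψ : AS1 ψ)
    {F : ℝ → ℝ} (hF : Continuous F) {C : ℝ} (hC : ∀ u, |F u| ≤ C) :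
    ∃ ξ : ℕ → ℝ, (∀ i ∈ I, ξ i ∈ Ioo (a i) (b i)) ∧
      ∫ u, F u * deriv ψ u = ∑' i : I, (ψ (b i) - ψ (a i)) * F (ξ i) := by
  have key : ∀ i, ∃ ξ, i ∈ I → ξ ∈ Ioo (a i) (b i) ∧
      ∫ u in Ioo (a i) (b i), F u * deriv ψ u = F ξ * (ψ (b i) - ψ (a i)) := by
    intro i
    by_cases hi : i ∈ I
    · obtain ⟨ξ, hξ, h⟩ :=
        exists_setIntegral_Ioo_mul_deriv_eq hψ.1 hF (hI.lt i hi) (hI.deriv_ne_zero i hi)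
      exact ⟨ξ, fun _ => ⟨hξ, h⟩⟩
    · exact ⟨0, fun h => absurd h hi⟩
  choose ξ hξ using key
  refine ⟨ξ, fun i hi => (hξ i hi).1, ?_⟩
  rw [hI.integral_mul_deriv_eq_tsum hψ hF.aestronglyMeasurable hC]
  exact tsum_congr fun i => by rw [(hξ i i.2).2, mul_comm]

end IsDerivNeZeroIntervals

def stepFun (I : Set ℕ) (a τ : ℕ → ℝ) (A u : ℝ) : ℝ :=
  sSup (insert A (τ '' {i | i ∈ I ∧ a i ≤ u}))

section StepFun

variable {I : Set ℕ} {a b τ : ℕ → ℝ} {A B : ℝ}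

theorem stepFun_set_subset (hτ : ∀ i, τ i ∈ Icc A B) (u : ℝ) :
    insert A (τ '' {i | i ∈ I ∧ a i ≤ u}) ⊆ Icc A B :=
  insert_subset_iff.2 ⟨left_mem_Icc.2 ((hτ 0).1.trans (hτ 0).2), image_subset_iff.2 fun i _ => hτ i⟩

theorem stepFun_mem_Icc (hτ : ∀ i, τ i ∈ Icc A B) (u : ℝ) : stepFun I a τ A u ∈ Icc A B :=
  ⟨le_csSup (bddAbove_Icc.mono (stepFun_set_subset hτ u)) (mem_insert _ _),
    csSup_le (insert_nonempty _ _) fun _ hx => (stepFun_set_subset hτ u hx).2⟩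

theorem stepFun_monotone (hτ : ∀ i, τ i ∈ Icc A B) : Monotone (stepFun I a τ A) :=
  fun _ v huv => csSup_le_csSup (bddAbove_Icc.mono (stepFun_set_subset hτ v)) (insert_nonempty _ _)
    (insert_subset_insert (image_mono fun _ hi => ⟨hi.1, hi.2.trans huv⟩))

theorem IsDerivNeZeroIntervals.stepFun_eq {ψ : ℝ → ℝ} (hI : IsDerivNeZeroIntervals ψ I a b)
    (hτ : ∀ i, τ i ∈ Icc A B) (hτmono : ∀ i₁ ∈ I, ∀ i₂ ∈ I, a i₁ ≤ a i₂ → τ i₁ ≤ τ i₂)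
    {i : ℕ} (hi : i ∈ I) {u : ℝ} (hu : u ∈ Ioo (a i) (b i)) : stepFun I a τ A u = τ i := by
  refine le_antisymm (csSup_le (insert_nonempty _ _) ?_)
    (le_csSup (bddAbove_Icc.mono (stepFun_set_subset hτ u))
      (mem_insert_of_mem _ ⟨i, ⟨hi, hu.1.le⟩, rfl⟩))
  rintro _ (rfl | ⟨j, ⟨hj, hju⟩, rfl⟩)
  · exact (hτ i).1
  · exact hτmono j hj i hi (not_lt.1 fun hij => hI.left_notMem hi hj ⟨hij, hju.trans_lt hu.2⟩)

end StepFun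

section Mollify

variable {s : ℝ → ℝ} {A B : ℝ}

namespace ContDiffBump

variable (ρ : ContDiffBump (0 : ℝ))

theorem convolution_normed_apply (s : ℝ → ℝ) (x : ℝ) :
    (ρ.normed volume ⋆[lsmul ℝ ℝ, volume] s) x = ∫ t, ρ.normed volume t * s (x - t) := by
  simp only [convolution_def, lsmul_apply, smul_eq_mul]

theorem integrable_normed_mul_comp_sub (hs : Monotone s) (hsAB : ∀ u, s u ∈ Icc A B) (x : ℝ) :
    Integrable fun t => ρ.normed volume t * s (x - t) :=
  ρ.integrable_normed.mul_bdd
    (hs.measurable.comp (measurable_const.sub measurable_id)).aestronglyMeasurable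
    (Eventually.of_forall fun _ => abs_le_max_abs_abs (hsAB _).1 (hsAB _).2)

theorem convolution_normed_mem_Icc (hs : Monotone s) (hsAB : ∀ u, s u ∈ Icc A B) (x : ℝ) :
    (ρ.normed volume ⋆[lsmul ℝ ℝ, volume] s) x ∈ Icc A B := by
  have hconst : ∀ c, ∫ t, ρ.normed volume t * c = c := fun c => by
    rw [integral_mul_const, ρ.integral_normed, one_mul]
  rw [convolution_normed_apply]
  constructor
  · calc A = ∫ t, ρ.normed volume t * A := (hconst A).symm
      _ ≤ _ := integral_mono (ρ.integrable_normed.mul_const A)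
          (ρ.integrable_normed_mul_comp_sub hs hsAB x)
          fun t => mul_le_mul_of_nonneg_left (hsAB _).1 (ρ.nonneg_normed t)
  · calc _ ≤ ∫ t, ρ.normed volume t * B :=
          integral_mono (ρ.integrable_normed_mul_comp_sub hs hsAB x)
            (ρ.integrable_normed.mul_const B)
            fun t => mul_le_mul_of_nonneg_left (hsAB _).2 (ρ.nonneg_normed t)
      _ = B := hconst B

theorem monotone_convolution_normed (hs : Monotone s) (hsAB : ∀ u, s u ∈ Icc A B) :
    Monotone (ρ.normed volume ⋆[lsmul ℝ ℝ, volume] s) := fun u v huv => by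
  simp only [convolution_normed_apply]
  exact integral_mono (ρ.integrable_normed_mul_comp_sub hs hsAB u)
    (ρ.integrable_normed_mul_comp_sub hs hsAB v)
    fun t => mul_le_mul_of_nonneg_left (hs (by linarith)) (ρ.nonneg_normed t)

theorem contDiff_convolution_normed (hs : Monotone s) :
    ContDiff ℝ 1 (ρ.normed volume ⋆[lsmul ℝ ℝ, volume] s) :=
  mod_cast ρ.hasCompactSupport_normed.contDiff_convolution_left (lsmul ℝ ℝ)
    (ρ.contDiff_normed (n := 1)) hs.locallyIntegrable

end ContDiffBump

theorem exists_opDiffeo_leftInverse_eq_of_monotone (hs : Monotone s) (hsAB : ∀ u, s u ∈ Icc A B)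
    {r : ℝ} (hr : 0 < r) :
    ∃ h g : ℝ → ℝ, OPDiffeo h ∧ Function.LeftInverse g h ∧ Continuous g ∧
      ∀ u, (∀ v ∈ Metric.ball u r, s v = s u) → g u = r * u + s u := by
  let ρ : ContDiffBump (0 : ℝ) := ⟨r / 2, r, half_pos hr, half_lt_self hr⟩
  set m := ρ.normed volume ⋆[lsmul ℝ ℝ, volume] s
  have hm : ContDiff ℝ 1 m := ρ.contDiff_convolution_normed hs
  have hmAB := ρ.convolution_normed_mem_Icc hs hsAB
  let g : ℝ → ℝ := fun u => r * u + m u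
  have hg : ContDiff ℝ 1 g := (contDiff_const.mul contDiff_id).add hm
  have hpos : ∀ u, 0 < deriv g u := fun u => by
    have : HasDerivAt g (r * 1 + deriv m u) u :=
      ((hasDerivAt_id' u).const_mul r).add (hm.differentiable one_ne_zero u).hasDerivAt
    rw [this.deriv, mul_one]
    exact add_pos_of_pos_of_nonneg hr (ρ.monotone_convolution_normed hs hsAB).deriv_nonneg
  have hsurj : Function.Surjective g := hg.continuous.surjective
    (tendsto_atTop_mono (fun u => add_le_add_right (hmAB u).1 _)
      (tendsto_atTop_add_const_right _ A (tendsto_id.const_mul_atTop hr)))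
    (tendsto_atBot_mono (fun u => add_le_add_right (hmAB u).2 _)
      (tendsto_atBot_add_const_right _ B (tendsto_id.const_mul_atBot hr)))
  obtain ⟨h, hh, hgh⟩ := exists_opDiffeo_leftInverse hg hpos hsurj
  exact ⟨h, g, hh, hgh, hg.continuous,
    fun u hu => congrArg (r * u + ·) (ρ.normed_convolution_eq_right hu)⟩

end Mollify

theorem tendsto_integral_comp_mul_deriv {ψ F c : ℝ → ℝ} {g : ℕ → ℝ → ℝ} (hψ : AS1 ψ)
    (hF : Continuous F) {M : ℝ} (hM : ∀ t, |F t| ≤ M) (hg : ∀ k, Measurable (g k))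
    (hlim : ∀ u, deriv ψ u ≠ 0 → Tendsto (fun k => g k u) atTop (𝓝 (c u))) :
    Tendsto (fun k => ∫ u, F (g k u) * deriv ψ u) atTop (𝓝 (∫ u, F (c u) * deriv ψ u)) := by
  refine tendsto_integral_of_dominated_convergence (fun u => M * |deriv ψ u|)
    (fun k => ((hF.measurable.comp (hg k)).mul
      (hψ.1.continuous_deriv le_rfl).measurable).aestronglyMeasurable)
    (hψ.integrable_deriv.abs.const_mul M) (fun k => Eventually.of_forall fun u => ?_)
    (Eventually.of_forall fun u => ?_)
  · rw [Real.norm_eq_abs, abs_mul]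
    exact mul_le_mul_of_nonneg_right (hM _) (abs_nonneg _)
  · by_cases hu : deriv ψ u = 0
    · simp only [hu, mul_zero]
      exact tendsto_const_nhds
    · exact ((hF.tendsto _).comp (hlim u hu)).mul_const _

theorem stdNorm_bddAbove {φ ψ : ℝ → ℝ} (hφ : AS1 φ) (hψ : AS1 ψ) :
    BddAbove (range fun h : {h : ℝ → ℝ // OPDiffeo h} => |∫ t, φ (-t) * deriv (ψ ∘ h.1) t|) := by
  obtain ⟨M, hM⟩ := hφ.exists_bound
  refine ⟨M * ∫ u, |deriv ψ u|, ?_⟩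
  rintro _ ⟨⟨h, hh⟩, rfl⟩
  obtain ⟨g, -, hgh, -⟩ := hh.2.2.1
  dsimp only
  rw [hh.integral_mul_deriv_comp hgh (hψ.1.differentiable one_ne_zero)]
  exact hψ.abs_integral_mul_deriv_le fun u => hM _

namespace IsDerivNeZeroIntervals

variable {φ ψ : ℝ → ℝ} {I : Set ℕ} {a b τ : ℕ → ℝ} {A B : ℝ}

theorem exists_tendsto_integral (hI : IsDerivNeZeroIntervals ψ I a b) (hφ : AS1 φ) (hψ : AS1 ψ)
    (hτ : ∀ i, τ i ∈ Icc A B) (hτmono : ∀ i₁ ∈ I, ∀ i₂ ∈ I, a i₁ ≤ a i₂ → τ i₁ ≤ τ i₂) :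
    ∃ h : ℕ → ℝ → ℝ, (∀ k, OPDiffeo (h k)) ∧
      Tendsto (fun k => ∫ t, φ (-t) * deriv (ψ ∘ h k) t) atTop
        (𝓝 (∑' i : I, (ψ (b i) - ψ (a i)) * φ (-(τ i)))) := by
  set s := stepFun I a τ A
  have hr : Tendsto (fun k : ℕ => 1 / ((k : ℝ) + 1)) atTop (𝓝 0) :=
    tendsto_one_div_add_atTop_nhds_zero_nat
  choose h g hh hgh hg hplateau using fun k : ℕ =>
    exists_opDiffeo_leftInverse_eq_of_monotone (stepFun_monotone hτ) (stepFun_mem_Icc hτ)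
      (Nat.one_div_pos_of_nat (n := k) (α := ℝ))
  obtain ⟨M, hM⟩ := hφ.exists_bound
  have hφ' : Continuous fun t => φ (-t) := hφ.1.continuous.comp continuous_neg
  refine ⟨h, hh, ?_⟩
  have hcov : (fun k => ∫ t, φ (-t) * deriv (ψ ∘ h k) t) =
      fun k => ∫ u, φ (-(g k u)) * deriv ψ u :=
    funext fun k => (hh k).integral_mul_deriv_comp (hgh k) (hψ.1.differentiable one_ne_zero) _
  rw [hcov, ← hI.integral_mul_deriv_eq_tsum_of_eqOn hψ
    (hφ'.measurable.comp (stepFun_monotone hτ).measurable).aestronglyMeasurable (fun u => hM _)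
    fun i hi u hu => congrArg (fun x => φ (-x)) (hI.stepFun_eq hτ hτmono hi hu)]
  refine tendsto_integral_comp_mul_deriv (F := fun t => φ (-t)) (c := s) hψ hφ' (fun t => hM _)
    (fun k => (hg k).measurable) fun u hu => ?_
  obtain ⟨i, hi, hui⟩ := hI.cover u hu
  obtain ⟨δ, hδ, hball⟩ := Metric.isOpen_iff.1 isOpen_Ioo u hui
  have heq : ∀ᶠ k : ℕ in atTop, 1 / ((k : ℝ) + 1) * u + s u = g k u :=
    (hr.eventually (gt_mem_nhds hδ)).mono fun k hk => (hplateau k u fun v hv =>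
      (hI.stepFun_eq hτ hτmono hi (hball (Metric.ball_subset_ball hk.le hv))).trans
        (hI.stepFun_eq hτ hτmono hi hui).symm).symm
  have hlim : Tendsto (fun k : ℕ => 1 / ((k : ℝ) + 1) * u + s u) atTop (𝓝 (s u)) := by
    simpa using (hr.mul_const u).add_const (s u)
  exact hlim.congr' heq

theorem abs_tsum_le_stdNorm (hI : IsDerivNeZeroIntervals ψ I a b) (hφ : AS1 φ) (hψ : AS1 ψ)
    (hτ : ∀ i, τ i ∈ Icc A B) (hτmono : ∀ i₁ ∈ I, ∀ i₂ ∈ I, a i₁ ≤ a i₂ → τ i₁ ≤ τ i₂) :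
    |∑' i : I, (ψ (b i) - ψ (a i)) * φ (-(τ i))| ≤ stdNorm ψ φ := by
  obtain ⟨h, hh, hlim⟩ := hI.exists_tendsto_integral hφ hψ hτ hτmono
  exact le_of_tendsto' hlim.abs fun k => le_ciSup (stdNorm_bddAbove hφ hψ) ⟨h k, hh k⟩

theorem exists_integral_eq_tsum (hI : IsDerivNeZeroIntervals ψ I a b) (hφ : AS1 φ) (hψ : AS1 ψ)
    (hAB : A ≤ B) (hsupp : Function.support (deriv fun t => φ (-t)) ⊆ Icc A B) {h : ℝ → ℝ}
    (hh : OPDiffeo h) :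
    ∃ τ : ℕ → ℝ, (∀ i, τ i ∈ Icc A B) ∧ (∀ i₁ ∈ I, ∀ i₂ ∈ I, a i₁ ≤ a i₂ → τ i₁ ≤ τ i₂) ∧
      (∀ i, i ∉ I → τ i = B) ∧
      ∫ t, φ (-t) * deriv (ψ ∘ h) t = ∑' i : I, (ψ (b i) - ψ (a i)) * φ (-(τ i)) := by
  classical
  obtain ⟨g, hg, hgh, hhg⟩ := hh.2.2.1
  have hg_mono : Monotone g := fun u v huv =>
    (strictMono_of_deriv_pos hh.2.2.2).le_iff_le.1 (by rwa [hhg u, hhg v])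
  obtain ⟨M, hM⟩ := hφ.exists_bound
  obtain ⟨ξ, hξ, hsum⟩ := hI.exists_integral_mul_deriv_eq_tsum hψ (F := fun u => φ (-(g u)))
    (hφ.1.continuous.comp (continuous_neg.comp hg.continuous)) fun u => hM _
  let τ : ℕ → ℝ := fun i => if i ∈ I then projIcc A B hAB (g (ξ i)) else B
  have hτI : ∀ i ∈ I, τ i = projIcc A B hAB (g (ξ i)) := fun i hi => if_pos hi
  refine ⟨τ, fun i => ?_, fun i₁ hi₁ i₂ hi₂ hle => ?_, fun i hi => if_neg hi, ?_⟩
  · by_cases hi : i ∈ I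
    · rw [hτI i hi]
      exact Subtype.prop _
    · rw [show τ i = B from if_neg hi]
      exact right_mem_Icc.2 hAB
  · rw [hτI i₁ hi₁, hτI i₂ hi₂]
    rcases hle.eq_or_lt with heq | hlt
    · rw [hI.eq_of_left_eq hi₁ hi₂ heq]
    · exact monotone_projIcc hAB (hg_mono ((hξ i₁ hi₁).2.le.trans
        ((hI.right_le_left_of_lt hi₁ hi₂ hlt).trans (hξ i₂ hi₂).1.le)))
  · rw [hh.integral_mul_deriv_comp hgh (hψ.1.differentiable one_ne_zero), hsum]
    refine tsum_congr fun i => ?_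
    rw [hτI i i.2, apply_projIcc_eq (f := fun t => φ (-t))
      ((hφ.1.differentiable one_ne_zero).comp differentiable_neg) hAB hsupp]

end IsDerivNeZeroIntervals

theorem statement14_general (φ ψ : ℝ → ℝ) (hφ : AS1 φ) (hψ : AS1 ψ)
    (I : Set ℕ)
    (a b : ℕ → ℝ)
    (hab : ∀ i ∈ I, a i < b i)
    (hne : ∀ i ∈ I, ∀ t ∈ Set.Ioo (a i) (b i), deriv ψ t ≠ 0)
    (hza : ∀ i ∈ I, deriv ψ (a i) = 0)
    (hcov : ∀ t, deriv ψ t ≠ 0 → ∃ i ∈ I, t ∈ Set.Ioo (a i) (b i))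
    (hinj : ∀ i ∈ I, ∀ j ∈ I, i ≠ j → a i ≠ a j)
    (A B : ℝ) (hAB : A ≤ B)
    (hsupp : Function.support (deriv fun t => φ (-t)) ⊆ Set.Icc A B) :
    IsLUB {x : ℝ | ∃ τ : ℕ → ℝ, (∀ i, τ i ∈ Set.Icc A B) ∧
        (∀ i₁ ∈ I, ∀ i₂ ∈ I, a i₁ ≤ a i₂ → τ i₁ ≤ τ i₂) ∧
        (∀ i, i ∉ I → τ i = B) ∧
        x = |∑' i : I, (ψ (b (i : ℕ)) - ψ (a (i : ℕ))) * φ (-(τ (i : ℕ)))|}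
      (stdNorm ψ φ) := by
  have hIab : IsDerivNeZeroIntervals ψ I a b := ⟨hab, hne, hza, hcov, hinj⟩
  refine ⟨?_, fun c hc => ?_⟩
  · rintro _ ⟨τ, hτ, hτmono, -, rfl⟩
    exact hIab.abs_tsum_le_stdNorm hφ hψ hτ hτmono
  · have : Nonempty {h : ℝ → ℝ // OPDiffeo h} := ⟨⟨id, OPDiffeo.id⟩⟩
    refine ciSup_le fun h => ?_
    obtain ⟨τ, hτ, hτmono, hτB, heq⟩ := hIab.exists_integral_eq_tsum hφ hψ hAB hsupp h.2
    exact hc ⟨τ, hτ, hτmono, hτB, by rw [heq]⟩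

theorem statement14 (φ ψ : ℝ → ℝ) (hφ : AS1 φ) (hψ : AS1 ψ)
    (hφ0 : ¬ ∀ t, φ t = 0) (hψ0 : ¬ ∀ t, ψ t = 0)
    (I : Set ℕ) (hI : I = Set.univ ∨ ∃ n : ℕ, I = {i | i < n})
    (a b : ℕ → ℝ)
    (hab : ∀ i ∈ I, a i < b i)
    (hne : ∀ i ∈ I, ∀ t ∈ Set.Ioo (a i) (b i), deriv ψ t ≠ 0)
    (hza : ∀ i ∈ I, deriv ψ (a i) = 0)
    (hzb : ∀ i ∈ I, deriv ψ (b i) = 0)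
    (hcov : ∀ t, deriv ψ t ≠ 0 → ∃ i ∈ I, t ∈ Set.Ioo (a i) (b i))
    (hinj : ∀ i ∈ I, ∀ j ∈ I, i ≠ j → a i ≠ a j)
    (A B : ℝ) (hAB : A ≤ B)
    (hsupp : Function.support (deriv fun t => φ (-t)) ⊆ Set.Icc A B)
    (hmin : ∀ A' B' : ℝ, Function.support (deriv fun t => φ (-t)) ⊆ Set.Icc A' B' →
      Set.Icc A B ⊆ Set.Icc A' B') :
    IsLUB {x : ℝ | ∃ τ : ℕ → ℝ, (∀ i, τ i ∈ Set.Icc A B) ∧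
        (∀ i₁ ∈ I, ∀ i₂ ∈ I, a i₁ ≤ a i₂ → τ i₁ ≤ τ i₂) ∧
        (∀ i, i ∉ I → τ i = B) ∧
        x = |∑' i : I, (ψ (b (i : ℕ)) - ψ (a (i : ℕ))) * φ (-(τ (i : ℕ)))|}
      (stdNorm ψ φ) :=
  statement14_general φ ψ hφ hψ I a b hab hne hza hcov hinj A B hAB hsupp
end
end
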